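/- arXiv:2102.04094 — 2 statements merged into one kernel-verified Lean document; each statement's English description precedes it below -/
import Mathlib

section
/- If n and a are integers with 3 ≤ a ≤ ⌊n/2⌋ and n > 3a, then C(n;1,a) admits a 2-bounded independent broadcast of maximum cost β_b(C(n;1,a)). -/
/-- The eccentricity of a vertex: maximum distance to any other vertex. -/
noncomputable def eccent {V : Type*} [Fintype V] (G : SimpleGraph V) (v : V) : ℕ :=
  Finset.univ.sup (fun u => G.dist v u)

/-- The diameter of a finite graph: maximum eccentricity. -/
noncomputable def graphDiam {V : Type*} [Fintype V] (G : SimpleGraph V) : ℕ :=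
  Finset.univ.sup (fun v => eccent G v)

/-- `f` is an independent broadcast on `G`. -/
def IsIndepBroadcast {V : Type*} [Fintype V] (G : SimpleGraph V) (f : V → ℕ) : Prop :=
  (∀ v, f v ≤ eccent G v) ∧
  ∀ u v : V, u ≠ v → 0 < f u → 0 < f v → max (f u) (f v) < G.dist u v

/-- The broadcast independence number: maximum cost of an independent broadcast. -/
noncomputable def betaB {V : Type*} [Fintype V] (G : SimpleGraph V) : ℕ :=
  sSup {k | ∃ f : V → ℕ, IsIndepBroadcast G f ∧ ∑ v, f v = k}

/-- The independence number: maximum size of an independent set. -/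
noncomputable def alphaNum {V : Type*} [Fintype V] (G : SimpleGraph V) : ℕ :=
  sSup {k | ∃ s : Finset V, (∀ u ∈ s, ∀ v ∈ s, ¬ G.Adj u v) ∧ s.card = k}

/-- The circulant graph `C(n;1,a)` on vertices `v_0,…,v_{n-1}` with edges
`v_i v_{i+1}` and `v_i v_{i+a}`, indices mod `n`. -/
def circulantGraph (n a : ℕ) : SimpleGraph (Fin n) :=
  SimpleGraph.fromRel (fun i j => (i.val + 1) % n = j.val ∨ (i.val + a) % n = j.val)

/-!
Start from a broadcast `g` of maximum cost. A vertex `w` with `g w = q ≥ 3` is traded for a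
"cloud": at least `q` pairwise non-adjacent vertices, each broadcasting `1`, in the ball of radius
`(q - 1) / 2` around `w`. Independence of `g` keeps two clouds at distance `≥ 2` and a cloud at
distance `≥ 3` from every vertex with `0 < g ≤ 2`, so the result is again an independent broadcast,
of at least the same cost and bounded by `2`.

In `C(n;1,a)` the vertex `v_{w + s + t a}` is within distance `|s| + |t|` of `v_w`. Clouds are cut
out of a checkerboard of lattice points `(s, t)` with `|s| < a / 2`: two of them differ by
`c a + δ` with `c + δ` even and `δ` a difference of two such `s`, which is never `0, ±1, ±a`. The
rows are chosen so that these differences stay below `n - a`, which rules out wrap-around; this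
is where `q ≤ ecc(w)` and `3 a < n` are used.
-/

open Finset

section Broadcast

variable {V : Type*} [Fintype V] {G : SimpleGraph V}

lemma bddAbove_broadcastCosts :
    BddAbove {k | ∃ f : V → ℕ, IsIndepBroadcast G f ∧ ∑ v, f v = k} :=
  ⟨∑ v, eccent G v, by rintro _ ⟨f, hf, rfl⟩; exact sum_le_sum fun v _ => hf.1 v⟩

lemma IsIndepBroadcast.sum_le_betaB {f : V → ℕ} (hf : IsIndepBroadcast G f) :
    ∑ v, f v ≤ betaB G :=
  le_csSup bddAbove_broadcastCosts ⟨f, hf, rfl⟩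

lemma exists_isIndepBroadcast_sum_eq_betaB :
    ∃ f : V → ℕ, IsIndepBroadcast G f ∧ ∑ v, f v = betaB G :=
  Nat.sSup_mem (s := {k | ∃ f : V → ℕ, IsIndepBroadcast G f ∧ ∑ v, f v = k})
    ⟨0, fun _ => 0, ⟨fun _ => Nat.zero_le _, fun _ _ _ h => (lt_irrefl 0 h).elim⟩, by simp⟩
    bddAbove_broadcastCosts

lemma dist_le_eccent (v u : V) : G.dist v u ≤ eccent G v :=
  le_sup (mem_univ u)

variable {g : V → ℕ}

lemma IsIndepBroadcast.two_le_dist (hg : IsIndepBroadcast G g) (hconn : G.Connected)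
    {w w' x y : V} (hne : w ≠ w') (hw : 0 < g w) (hw' : 0 < g w')
    (hx : G.dist w x ≤ (g w - 1) / 2) (hy : G.dist w' y ≤ (g w' - 1) / 2) :
    2 ≤ G.dist x y := by
  have hww' := hg.2 w w' hne hw hw'
  have h₁ : G.dist w w' ≤ G.dist w x + G.dist x w' := hconn.dist_triangle
  have h₂ : G.dist x w' ≤ G.dist x y + G.dist y w' := hconn.dist_triangle
  rw [SimpleGraph.dist_comm (u := y)] at h₂
  omega

lemma IsIndepBroadcast.three_le_dist (hg : IsIndepBroadcast G g) (hconn : G.Connected)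
    {w x u : V} (hw : 3 ≤ g w) (hx : G.dist w x ≤ (g w - 1) / 2) (hu : 0 < g u)
    (hu₂ : g u ≤ 2) : 3 ≤ G.dist x u := by
  have hwu := hg.2 w u (by rintro rfl; omega) (by omega) hu
  have := hconn.dist_triangle (u := w) (v := x) (w := u)
  omega

/-- A vertex `w` of broadcast value `q ≥ 3` can be traded for the independent set `C`. -/
def IsCloud (G : SimpleGraph V) (w : V) (q : ℕ) (C : Finset V) : Prop :=
  q ≤ #C ∧ (∀ x ∈ C, G.dist w x ≤ (q - 1) / 2) ∧ G.IsIndepSet C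

lemma IsIndepBroadcast.ite_mem {U : Finset V} [DecidablePred (· ∈ U)]
    (hg : IsIndepBroadcast G g)
    (hUU : ∀ x ∈ U, ∀ y ∈ U, x ≠ y → 2 ≤ G.dist x y)
    (hUg : ∀ x ∈ U, ∀ u, 0 < g u → g u ≤ 2 → 3 ≤ G.dist x u)
    (hUecc : ∀ x ∈ U, 1 ≤ eccent G x) :
    IsIndepBroadcast G fun x => if x ∈ U then 1 else if g x ≤ 2 then g x else 0 := by
  refine ⟨fun x => ?_, fun u v huv hu hv => ?_⟩
  · dsimp only
    split_ifs
    exacts [hUecc x ‹_›, hg.1 x, Nat.zero_le _]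
  · dsimp only at hu hv ⊢
    by_cases huU : u ∈ U <;> by_cases hvU : v ∈ U <;>
      simp only [huU, hvU, if_true, if_false] at hu hv ⊢
    · have := hUU u huU v hvU huv; omega
    · split_ifs at hv ⊢ with hv₂
      · have := hUg u huU v hv hv₂; omega
      · omega
    · split_ifs at hu ⊢ with hu₂
      · have := hUg v hvU u hu hu₂; rw [SimpleGraph.dist_comm] at this; omega
      · omega
    · split_ifs at hu hv ⊢
      all_goals first | omega | exact hg.2 u v huv hu hv

variable {Cl : V → Finset V}

lemma IsIndepBroadcast.two_le_dist_of_mem_clouds (hg : IsIndepBroadcast G g)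
    (hconn : G.Connected) (hCl : ∀ w, 3 ≤ g w → IsCloud G w (g w) (Cl w)) {w w' x y : V}
    (hw : 3 ≤ g w) (hw' : 3 ≤ g w') (hx : x ∈ Cl w) (hy : y ∈ Cl w') (hxy : x ≠ y) :
    2 ≤ G.dist x y := by
  rcases eq_or_ne w w' with rfl | hne
  · exact hconn.one_lt_dist_of_ne_of_not_adj hxy ((hCl w hw).2.2 hx hy hxy)
  · exact hg.two_le_dist hconn hne (by omega) (by omega) ((hCl w hw).2.1 x hx)
      ((hCl w' hw').2.1 y hy)

section cloudUnion

variable [DecidableEq V]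

def cloudUnion (g : V → ℕ) (Cl : V → Finset V) : Finset V :=
  (univ.filter fun w => 3 ≤ g w).biUnion Cl

lemma mem_cloudUnion {x : V} : x ∈ cloudUnion g Cl ↔ ∃ w, 3 ≤ g w ∧ x ∈ Cl w := by
  simp [cloudUnion]

lemma IsIndepBroadcast.three_le_dist_of_mem_cloudUnion (hg : IsIndepBroadcast G g)
    (hconn : G.Connected) (hCl : ∀ w, 3 ≤ g w → IsCloud G w (g w) (Cl w)) {x u : V}
    (hx : x ∈ cloudUnion g Cl) (hu : 0 < g u) (hu₂ : g u ≤ 2) : 3 ≤ G.dist x u := by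
  obtain ⟨w, hw, hxw⟩ := mem_cloudUnion.1 hx
  exact hg.three_le_dist hconn hw ((hCl w hw).2.1 x hxw) hu hu₂

lemma one_le_eccent_of_mem_cloudUnion (hconn : G.Connected)
    (hCl : ∀ w, 3 ≤ g w → IsCloud G w (g w) (Cl w)) {x : V} (hx : x ∈ cloudUnion g Cl) :
    1 ≤ eccent G x := by
  obtain ⟨w, hw, hxw⟩ := mem_cloudUnion.1 hx
  obtain ⟨y, -, hyx⟩ := exists_mem_ne (by have := (hCl w hw).1; omega : 1 < #(Cl w)) x
  exact (hconn.pos_dist_of_ne hyx.symm).trans_le (dist_le_eccent x y)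

lemma IsIndepBroadcast.sum_le_card_cloudUnion_add (hg : IsIndepBroadcast G g)
    (hconn : G.Connected) (hCl : ∀ w, 3 ≤ g w → IsCloud G w (g w) (Cl w)) :
    ∑ x, g x ≤ #(cloudUnion g Cl) + ∑ x, if g x ≤ 2 then g x else 0 := by
  have hdisj : (↑(univ.filter fun w => 3 ≤ g w) : Set V).PairwiseDisjoint Cl := by
    intro w hw w' hw' hne
    simp only [coe_filter, mem_univ, true_and, Set.mem_ofPred_eq] at hw hw'
    refine disjoint_left.2 fun x hx hx' => ?_
    have := hg.two_le_dist hconn hne (by omega) (by omega) ((hCl w hw).2.1 x hx)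
      ((hCl w' hw').2.1 x hx')
    simp at this
  calc ∑ x, g x = ∑ w ∈ {w | 3 ≤ g w}, g w + ∑ x, if g x ≤ 2 then g x else 0 := by
        rw [sum_filter, ← sum_add_distrib]
        exact sum_congr rfl fun x _ => by split_ifs <;> omega
    _ ≤ ∑ w ∈ {w | 3 ≤ g w}, #(Cl w) + ∑ x, if g x ≤ 2 then g x else 0 := by
        gcongr with w hw
        exact (hCl w (mem_filter.1 hw).2).1
    _ = _ := by rw [cloudUnion, card_biUnion hdisj]

end cloudUnion

theorem IsIndepBroadcast.exists_two_bounded_sum_le (hconn : G.Connected) (hg : IsIndepBroadcast G g)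
    (hcloud : ∀ w, 3 ≤ g w → ∃ C, IsCloud G w (g w) C) :
    ∃ f : V → ℕ, IsIndepBroadcast G f ∧ ∑ v, g v ≤ ∑ v, f v ∧ ∀ v, f v ≤ 2 := by
  classical
  choose! Cl hCl using hcloud
  set U := cloudUnion g Cl
  set s : V → ℕ := fun x => if g x ≤ 2 then g x else 0
  have hUU : ∀ x ∈ U, ∀ y ∈ U, x ≠ y → 2 ≤ G.dist x y := by
    intro x hx y hy hxy
    obtain ⟨w, hw, hxw⟩ := mem_cloudUnion.1 hx
    obtain ⟨w', hw', hyw'⟩ := mem_cloudUnion.1 hy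
    exact hg.two_le_dist_of_mem_clouds hconn hCl hw hw' hxw hyw' hxy
  have hUg : ∀ x ∈ U, ∀ u, 0 < g u → g u ≤ 2 → 3 ≤ G.dist x u :=
    fun x hx u => hg.three_le_dist_of_mem_cloudUnion hconn hCl hx
  have hsU : ∀ x ∈ U, s x = 0 := by
    intro x hx
    by_contra h
    have := hUg x hx x (by simp only [s] at h; split_ifs at h <;> omega)
      (by simp only [s] at h; split_ifs at h <;> omega)
    simp at this
  refine ⟨_, hg.ite_mem hUU hUg fun x hx => one_le_eccent_of_mem_cloudUnion hconn hCl hx,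
    (hg.sum_le_card_cloudUnion_add hconn hCl).trans_eq ?_, fun x => by split_ifs <;> omega⟩
  have : ∀ x, (if x ∈ U then 1 else s x) = (if x ∈ U then 1 else 0) + s x := fun x => by
    split_ifs with hx
    exacts [(hsU x hx).symm ▸ rfl, (zero_add _).symm]
  simp only [this, sum_add_distrib, sum_boole, Nat.cast_id, filter_mem_eq_inter, univ_inter, s]
  rfl

theorem exists_isIndepBroadcast_sum_eq_betaB_le_two (hconn : G.Connected)
    (hcloud : ∀ w q, 3 ≤ q → q ≤ eccent G w → ∃ C, IsCloud G w q C) :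
    ∃ f : V → ℕ, IsIndepBroadcast G f ∧ ∑ v, f v = betaB G ∧ ∀ v, f v ≤ 2 := by
  obtain ⟨g, hg, hgβ⟩ := exists_isIndepBroadcast_sum_eq_betaB (G := G)
  obtain ⟨f, hf, hgf, hf₂⟩ :=
    hg.exists_two_bounded_sum_le hconn fun w hw => hcloud w (g w) hw (hg.1 w)
  exact ⟨f, hf, le_antisymm hf.sum_le_betaB (hgβ ▸ hgf), hf₂⟩

end Broadcast

lemma SimpleGraph.exists_walk_length_eq_natAbs {V : Type*} {G : SimpleGraph V} {f : ℤ → V}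
    {e : ℤ} (h : ∀ x, G.Adj (f x) (f (x + e))) (x k : ℤ) :
    ∃ p : G.Walk (f x) (f (x + k * e)), p.length = k.natAbs := by
  have hnat : ∀ (m : ℕ) x, ∃ p : G.Walk (f x) (f (x + m * e)), p.length = m := by
    intro m
    induction m with
    | zero => exact fun x => ⟨SimpleGraph.Walk.nil.copy rfl (by simp), by simp⟩
    | succ m ih =>
      intro x
      obtain ⟨p, hp⟩ := ih x
      exact ⟨(p.concat (h _)).copy rfl (by push_cast; ring_nf), by simp [hp]⟩
  obtain ⟨m, rfl | rfl⟩ := Int.eq_nat_or_neg k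
  · simpa using hnat m x
  · obtain ⟨p, hp⟩ := hnat m (x - m * e)
    exact ⟨p.reverse.copy (by ring_nf) (by ring_nf), by simp [hp]⟩

lemma exists_eq_add_mul_natAbs_le {a : ℕ} (ha : 0 < a) {e : ℤ} {N : ℕ} (he : |e| ≤ N) :
    ∃ s t : ℤ, e = s + t * a ∧ s.natAbs ≤ a / 2 ∧ t.natAbs ≤ (N + a / 2) / a := by
  obtain ⟨t, ρ, hρ₀, hρa, hdiv⟩ : ∃ t ρ : ℤ, 0 ≤ ρ ∧ ρ < a ∧ ρ + t * a = e + (a / 2 : ℕ) :=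
    ⟨_, _, Int.emod_nonneg _ (by omega), Int.emod_lt_of_pos _ (by omega),
      Int.emod_add_ediv_mul _ _⟩
  refine ⟨e - t * a, t, by ring, by omega, ?_⟩
  rw [Nat.le_div_iff_mul_le ha]
  zify
  rw [abs_le] at he
  rcases abs_cases t with ⟨h, -⟩ | ⟨h, -⟩ <;> rw [h] <;> push_cast [neg_mul] <;> omega

lemma mul_add_notMem_of_even {a W : ℕ} (hW : 2 * W < a) {c δ : ℤ} (hδ : |δ| ≤ 2 * W)
    (hpar : Even (c + δ)) (hne : c ≠ 0 ∨ δ ≠ 0) :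
    c * a + δ ∉ ({0, 1, -1, (a : ℤ), -(a : ℤ)} : Finset ℤ) := by
  obtain ⟨k, hk⟩ := hpar
  rw [abs_le] at hδ
  simp only [Finset.mem_insert, Finset.mem_singleton, not_or]
  rcases (by omega : c ≤ -2 ∨ c = -1 ∨ c = 0 ∨ c = 1 ∨ 2 ≤ c) with h | rfl | rfl | rfl | h
  · have : c * a ≤ -2 * (a : ℤ) := by nlinarith
    omega
  · omega
  · omega
  · omega
  · have : 2 * (a : ℤ) ≤ c * a := by nlinarith
    omega

/-- The lattice points `(s, t)` of row `t` with `|s| ≤ b` and `s ≡ b [ZMOD 2]`; the point `(s, t)`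
stands for the vertex offset `s + t a`. -/
def latticeRow (b : ℕ) (t : ℤ) : Finset (ℤ × ℤ) :=
  (range (b + 1)).image fun j : ℕ => (2 * (j : ℤ) - b, t)

lemma card_latticeRow (b : ℕ) (t : ℤ) : #(latticeRow b t) = b + 1 := by
  rw [latticeRow, card_image_of_injective _ fun j j' h => by simpa using h, card_range]

lemma of_mem_latticeRow {b : ℕ} {t : ℤ} {p : ℤ × ℤ} (hp : p ∈ latticeRow b t) :
    p.2 = t ∧ p.1.natAbs ≤ b ∧ Even (p.1 + b) := by
  obtain ⟨j, hj, rfl⟩ := mem_image.1 hp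
  rw [mem_range] at hj
  refine ⟨rfl, by omega, ⟨j, by ring⟩⟩

lemma disjoint_latticeRow {b b' : ℕ} {t t' : ℤ} (h : t ≠ t') :
    Disjoint (latticeRow b t) (latticeRow b' t') :=
  disjoint_left.2 fun _ hp hp' =>
    h ((of_mem_latticeRow hp).1.symm.trans (of_mem_latticeRow hp').1)

lemma card_biUnion_latticeRow {s : Finset ℕ} (b : ℕ) {τ : ℕ → ℤ} (hτ : Set.InjOn τ s) :
    #(s.biUnion fun i => latticeRow b (τ i)) = #s * (b + 1) := by
  rw [card_biUnion fun i hi i' hi' h => disjoint_latticeRow (hτ.ne hi hi' h)]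
  simp [card_latticeRow]

section Circulant

/-- The vertex `v_{x mod n}`; integer indices make negative offsets available. -/
def toVertex (n : ℕ) [NeZero n] (x : ℤ) : Fin n :=
  ⟨(x % n).toNat, by
    have hn : (0 : ℤ) < n := by exact_mod_cast Nat.pos_of_neZero n
    have := Int.emod_lt_of_pos x hn
    omega⟩

variable {n a : ℕ} [NeZero n]

lemma coe_toVertex_val (x : ℤ) : ((toVertex n x : ℕ) : ℤ) = x % n :=
  Int.toNat_of_nonneg (Int.emod_nonneg _ (by exact_mod_cast NeZero.ne n))

lemma toVertex_val (v : Fin n) : toVertex n v.val = v := by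
  ext
  rw [← Int.natCast_inj, coe_toVertex_val,
    Int.emod_eq_of_lt (by omega) (by exact_mod_cast v.2)]

lemma toVertex_eq_iff {x y : ℤ} : toVertex n x = toVertex n y ↔ (n : ℤ) ∣ y - x := by
  rw [Fin.ext_iff, ← Int.natCast_inj, coe_toVertex_val, coe_toVertex_val]
  exact Int.modEq_iff_dvd

lemma toVertex_val_add_mod_eq_iff {x y : ℤ} {k : ℕ} :
    ((toVertex n x).val + k) % n = (toVertex n y).val ↔ (n : ℤ) ∣ y - x - k := by
  rw [← Int.natCast_inj]
  push_cast
  rw [coe_toVertex_val, coe_toVertex_val, Int.emod_add_emod, sub_sub]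
  exact Int.modEq_iff_dvd

lemma circulantGraph_adj_toVertex_iff {x y : ℤ} :
    (circulantGraph n a).Adj (toVertex n x) (toVertex n y) ↔ ¬ (n : ℤ) ∣ y - x ∧
      ((n : ℤ) ∣ y - x - 1 ∨ (n : ℤ) ∣ y - x - a ∨
        (n : ℤ) ∣ x - y - 1 ∨ (n : ℤ) ∣ x - y - a) := by
  simp only [circulantGraph, SimpleGraph.fromRel_adj, ne_eq, toVertex_eq_iff,
    toVertex_val_add_mod_eq_iff, Nat.cast_one, or_assoc]

lemma circulantGraph_adj_toVertex_add {k : ℕ} (hk : k = 1 ∨ k = a) (hk₀ : 0 < k)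
    (hkn : k < n) (x : ℤ) : (circulantGraph n a).Adj (toVertex n x) (toVertex n (x + k)) := by
  rw [circulantGraph_adj_toVertex_iff, add_sub_cancel_left]
  refine ⟨fun h => ?_, by rcases hk with rfl | rfl <;> simp⟩
  have := Int.eq_zero_of_abs_lt_dvd h (by rw [abs_lt]; omega)
  omega

lemma circulantGraph_dist_toVertex_le (ha : 0 < a) (han : a < n) (x s t : ℤ) :
    (circulantGraph n a).dist (toVertex n x) (toVertex n (x + s + t * a)) ≤
      s.natAbs + t.natAbs := by
  obtain ⟨p, hp⟩ := SimpleGraph.exists_walk_length_eq_natAbs (f := toVertex n) (e := (1 : ℕ))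
    (circulantGraph_adj_toVertex_add (.inl rfl) one_pos (by omega)) x s
  obtain ⟨q, hq⟩ := SimpleGraph.exists_walk_length_eq_natAbs (f := toVertex n) (e := a)
    (circulantGraph_adj_toVertex_add (.inr rfl) ha han) (x + s * (1 : ℕ)) t
  have := SimpleGraph.dist_le <|
    (p.append q).copy (v' := toVertex n (x + s + t * a)) rfl (by simp)
  simpa [hp, hq] using this

lemma circulantGraph_connected (ha : 0 < a) (han : a < n) : (circulantGraph n a).Connected := by
  refine SimpleGraph.connected_iff_exists_forall_reachable _ |>.2 ⟨toVertex n 0, fun v => ?_⟩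
  obtain ⟨p, -⟩ := SimpleGraph.exists_walk_length_eq_natAbs (f := toVertex n) (e := (1 : ℕ))
    (circulantGraph_adj_toVertex_add (.inl rfl) one_pos (by omega)) 0 v.val
  exact ⟨p.copy rfl (by simp [toVertex_val])⟩

lemma eccent_circulantGraph_le (ha : 0 < a) (han : a < n) (v : Fin n) :
    eccent (circulantGraph n a) v ≤ a / 2 + (n / 2 + a / 2) / a := by
  refine Finset.sup_le fun u _ => ?_
  obtain ⟨e, he, hu⟩ : ∃ e : ℤ, |e| ≤ (n / 2 : ℕ) ∧ (n : ℤ) ∣ u.val - (v.val + e) := by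
    have := u.isLt
    have := v.isLt
    by_cases h₁ : (n / 2 : ℕ) < (u.val : ℤ) - v.val
    · exact ⟨u.val - v.val - n, by rw [abs_le]; omega, ⟨1, by ring⟩⟩
    by_cases h₂ : (u.val : ℤ) - v.val < -(n / 2 : ℕ)
    · exact ⟨u.val - v.val + n, by rw [abs_le]; omega, ⟨-1, by ring⟩⟩
    exact ⟨u.val - v.val, by rw [abs_le]; omega, ⟨0, by ring⟩⟩
  obtain ⟨s, t, rfl, hs, ht⟩ := exists_eq_add_mul_natAbs_le ha he
  rw [← toVertex_val u, ← toVertex_val v, ← toVertex_eq_iff.2 hu, ← add_assoc]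
  exact (circulantGraph_dist_toVertex_le ha han _ _ _).trans (add_le_add hs ht)

lemma circulantGraph_not_adj_toVertex (ha : 0 < a) {x y : ℤ} (hd : |y - x| + a < n)
    (hsep : y - x ∉ ({0, 1, -1, (a : ℤ), -(a : ℤ)} : Finset ℤ)) :
    toVertex n x ≠ toVertex n y ∧ ¬ (circulantGraph n a).Adj (toVertex n x) (toVertex n y) := by
  have key : ∀ D e : ℤ, |D| + a < n → |e| ≤ a → (n : ℤ) ∣ D - e → D = e := by
    intro D e hD he h
    have := le_abs_self D
    have := neg_abs_le D
    rw [abs_le] at he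
    have := Int.eq_zero_of_abs_lt_dvd h (by rw [abs_lt]; omega)
    omega
  have hd' : |x - y| + a < n := by rwa [abs_sub_comm]
  simp only [Finset.mem_insert, Finset.mem_singleton, not_or] at hsep
  refine ⟨fun h => hsep.1 (key _ 0 hd (by simp) (by simpa using toVertex_eq_iff.1 h)), ?_⟩
  rw [circulantGraph_adj_toVertex_iff]
  rintro ⟨-, h | h | h | h⟩
  · exact hsep.2.1 (key _ 1 hd (by simpa) h)
  · exact hsep.2.2.2.1 (key _ a hd (by simp) h)
  · have := key _ 1 hd' (by simpa) h
    omega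
  · have := key _ a hd' (by simp) h
    omega

lemma exists_isCloud_of_lattice (ha : 0 < a) (han : a < n) (w : Fin n)
    {q W : ℕ} (hW : 2 * W < a) {ε m : ℤ} {P : Finset (ℤ × ℤ)} (hq : q ≤ #P)
    (hP : ∀ p ∈ P,
      p.1.natAbs ≤ W ∧ p.1.natAbs + p.2.natAbs ≤ (q - 1) / 2 ∧ Even (p.1 + p.2 + ε))
    (hspan : ∀ p ∈ P, m ≤ p.1 + p.2 * a ∧ p.1 + p.2 * a + a < m + n) :
    ∃ C, IsCloud (circulantGraph n a) w q C := by
  classical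
  set φ : ℤ × ℤ → Fin n := fun p => toVertex n (w.val + p.1 + p.2 * a)
  have hsep : ∀ p ∈ P, ∀ p' ∈ P, p ≠ p' →
      φ p ≠ φ p' ∧ ¬ (circulantGraph n a).Adj (φ p) (φ p') := by
    intro p hp p' hp' hne
    obtain ⟨hs, -, he⟩ := hP p hp
    obtain ⟨hs', -, he'⟩ := hP p' hp'
    have hδ : |p'.1 - p.1| ≤ 2 * W := by rw [abs_le]; omega
    have hpar : Even (p'.2 - p.2 + (p'.1 - p.1)) := by
      rw [show p'.2 - p.2 + (p'.1 - p.1) = p'.1 + p'.2 + ε - (p.1 + p.2 + ε) by ring]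
      exact he'.sub he
    have hcδ : p'.2 - p.2 ≠ 0 ∨ p'.1 - p.1 ≠ 0 := by
      by_contra! h
      exact hne (Prod.ext (by omega) (by omega))
    apply circulantGraph_not_adj_toVertex ha
    · have := hspan p hp
      have := hspan p' hp'
      rw [← lt_sub_iff_add_lt, abs_lt]
      constructor <;> linarith
    · convert mul_add_notMem_of_even hW hδ hpar hcδ using 2
      ring
  refine ⟨P.image φ, ?_, ?_, ?_⟩
  · rwa [card_image_of_injOn fun p hp p' hp' h =>
      by_contra fun hne => (hsep p hp p' hp' hne).1 h]
  · simp only [mem_image]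
    rintro _ ⟨p, hp, rfl⟩
    have := circulantGraph_dist_toVertex_le ha han w.val p.1 p.2
    rw [toVertex_val] at this
    exact this.trans (hP p hp).2.1
  · simp only [coe_image]
    rintro _ ⟨p, hp, rfl⟩ _ ⟨p', hp', rfl⟩ hne
    exact (hsep p hp p' hp' fun h => hne (h ▸ rfl)).2

lemma exists_isCloud_of_two_mul_lt (h3a : 3 * a < n) (w : Fin n) {q : ℕ} (hq : 3 ≤ q)
    (hqa : 2 * ((q - 1) / 2) < a) : ∃ C, IsCloud (circulantGraph n a) w q C := by
  set r := (q - 1) / 2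
  have hr : 1 ≤ r := by omega
  have hdisj : Disjoint (latticeRow r 0 ∪ latticeRow (r - 1) 1) {((r : ℤ) - 1, -1)} := by
    simp only [disjoint_singleton_right, mem_union, not_or]
    exact ⟨fun h => by simpa using (of_mem_latticeRow h).1,
      fun h => by simpa using (of_mem_latticeRow h).1⟩
  -- all offsets lie in `[r - 1 - a, r - 1 + a]`, an interval of length `2 a < n - a`
  refine exists_isCloud_of_lattice (by omega) (by omega) w (W := r) (by omega) (ε := r)
    (m := r - 1 - a)
    (P := latticeRow r 0 ∪ latticeRow (r - 1) 1 ∪ {((r : ℤ) - 1, -1)}) ?_ ?_ ?_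
  · rw [card_union_of_disjoint hdisj, card_union_of_disjoint (disjoint_latticeRow (by simp)),
      card_latticeRow, card_latticeRow, card_singleton]
    omega
  all_goals
    rintro ⟨s, t⟩ hp
    simp only [mem_union, mem_singleton, Prod.mk.injEq] at hp
    rcases hp with (hp | hp) | ⟨rfl, rfl⟩
    · obtain ⟨rfl, hs, he⟩ := of_mem_latticeRow hp
      simp only [Int.even_iff, zero_mul] at he ⊢
      omega
    · obtain ⟨rfl, hs, he⟩ := of_mem_latticeRow hp
      simp only [Int.even_iff, one_mul] at he ⊢
      omega
    · simp only [Int.even_iff, neg_mul, one_mul]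
      omega

lemma exists_isCloud_of_eq_add (ha : 3 ≤ a) (w : Fin n) {q T : ℕ} (hT : 1 ≤ T)
    (hqT : (q - 1) / 2 = (a - 1) / 2 + T) (hq : 3 ≤ (q - 1) / 2) (hn : (2 * T + 2) * a ≤ n) :
    ∃ C, IsCloud (circulantGraph n a) w q C := by
  set W := (a - 1) / 2
  have hW : 1 ≤ W := by omega
  -- rows `-T, …, T` alternate between half-widths `W` and `W - 1`, fixing the parity of `s + t`
  set evenRows := (range (T + 1)).biUnion fun i => latticeRow W (2 * i - T)
  set oddRows := (range T).biUnion fun i => latticeRow (W - 1) (2 * i + 1 - T)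
  have key : ∀ p ∈ evenRows ∪ oddRows,
      p.1.natAbs ≤ W ∧ p.2.natAbs ≤ T ∧ Even (p.1 + p.2 + W + T) := by
    intro p hp
    simp only [Int.even_iff]
    rcases mem_union.1 hp with hp | hp <;> obtain ⟨i, hi, hp⟩ := mem_biUnion.1 hp <;>
      obtain ⟨ht, hs, he⟩ := of_mem_latticeRow hp <;> rw [mem_range] at hi <;>
      rw [Int.even_iff] at he <;> omega
  have hdisj : Disjoint evenRows oddRows := by
    refine disjoint_left.2 fun p hp hp' => ?_
    obtain ⟨i, -, hp⟩ := mem_biUnion.1 hp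
    obtain ⟨i', -, hp'⟩ := mem_biUnion.1 hp'
    have := (of_mem_latticeRow hp).1.symm.trans (of_mem_latticeRow hp').1
    omega
  have hn' : (2 * T + 2) * (a : ℤ) ≤ n := by exact_mod_cast hn
  refine exists_isCloud_of_lattice (by omega) (by nlinarith) w (W := W) (by omega)
    (ε := W + T) (m := -(T * a) - W) (P := evenRows ∪ oddRows) ?_ (fun p hp => ?_)
    fun p hp => ?_
  · rw [card_union_of_disjoint hdisj,
      card_biUnion_latticeRow _ fun i _ i' _ h => by simpa using h,
      card_biUnion_latticeRow _ fun i _ i' _ h => by simpa using h, card_range, card_range]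
    have : q ≤ 2 * (W + T) + 2 := by omega
    rw [Nat.sub_add_cancel hW]
    nlinarith
  · obtain ⟨hs, ht, he⟩ := key p hp
    exact ⟨hs, by omega, by rwa [← add_assoc]⟩
  · obtain ⟨hs, ht, -⟩ := key p hp
    have h₁ : p.2 * a ≤ T * a := mul_le_mul_of_nonneg_right (by omega) (by positivity)
    have h₂ : -(T * a : ℤ) ≤ p.2 * a := by
      rw [← neg_mul]; exact mul_le_mul_of_nonneg_right (by omega) (by positivity)
    have : -(W : ℤ) ≤ p.1 ∧ p.1 ≤ W := by omega
    have : 2 * (W : ℤ) < a := by omega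
    constructor <;> linarith

/-- The row construction is one point short when `(a - 1) / 2 = (q - 1) / 2 - (a - 1) / 2 = 1`. -/
lemma exists_isCloud_of_eq_two (ha : 3 ≤ a) (hn : 4 * a + 1 < n) (w : Fin n) {q : ℕ}
    (hq : (q - 1) / 2 = 2) : ∃ C, IsCloud (circulantGraph n a) w q C := by
  refine exists_isCloud_of_lattice (by omega) (by omega) w (W := 1) (by omega) (ε := 0)
    (m := -a - 1) (P := {(-1, -1), (1, -1), (0, 0), (-1, 1), (1, 1), (0, 2)}) ?_ ?_ ?_
  · have : #({(-1, -1), (1, -1), (0, 0), (-1, 1), (1, 1), (0, 2)} : Finset (ℤ × ℤ)) = 6 := rfl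
    omega
  · rw [hq]
    decide
  · simp only [mem_insert, mem_singleton, forall_eq_or_imp, forall_eq]
    omega

lemma circulantGraph_exists_isCloud (ha : 3 ≤ a) (h3a : 3 * a < n) (w : Fin n) {q : ℕ}
    (hq : 3 ≤ q) (hqe : q ≤ eccent (circulantGraph n a) w) :
    ∃ C, IsCloud (circulantGraph n a) w q C := by
  have hqK := hqe.trans (eccent_circulantGraph_le (by omega) (by omega) w)
  set K := (n / 2 + a / 2) / a
  have hK : K * a ≤ n / 2 + a / 2 := Nat.div_mul_le_self _ _
  rcases lt_or_ge (2 * ((q - 1) / 2)) a with hqa | hqa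
  · exact exists_isCloud_of_two_mul_lt h3a w hq hqa
  rcases le_or_gt 3 ((q - 1) / 2) with hr | hr
  · refine exists_isCloud_of_eq_add ha w (T := (q - 1) / 2 - (a - 1) / 2) (by omega) (by omega)
      hr ?_
    calc (2 * ((q - 1) / 2 - (a - 1) / 2) + 2) * a ≤ (K + 1) * a :=
          Nat.mul_le_mul_right _ (by omega)
      _ ≤ n := by rw [add_one_mul]; omega
  · have : 3 * a ≤ K * a := Nat.mul_le_mul_right _ (by omega)
    exact exists_isCloud_of_eq_two ha (by omega) w (by omega)

end Circulant

theorem stmt8_general (n a : ℕ) (ha : 3 ≤ a) (h3a : 3 * a < n) :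
    ∃ f : Fin n → ℕ, IsIndepBroadcast (circulantGraph n a) f ∧
      (∑ v, f v) = betaB (circulantGraph n a) ∧ ∀ v, f v ≤ 2 := by
  have : NeZero n := ⟨by omega⟩
  exact exists_isIndepBroadcast_sum_eq_betaB_le_two
    (circulantGraph_connected (by omega) (by omega)) fun w _ hq hqe =>
      circulantGraph_exists_isCloud ha h3a w hq hqe

theorem stmt8 (n a : ℕ) (ha : 3 ≤ a) (han : a ≤ n / 2) (h3a : 3 * a < n) :
    ∃ f : Fin n → ℕ, IsIndepBroadcast (circulantGraph n a) f ∧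
      (∑ v, f v) = betaB (circulantGraph n a) ∧ ∀ v, f v ≤ 2 :=
  stmt8_general n a ha h3a
end

section
/- For every integer n ≥ 6, β_b(C(n;1,2)) = (n−3)/2 if n ≡ 9 (mod 12), and β_b(C(n;1,2)) = 2(⌈(n−1)/4⌉ − 1) otherwise; moreover β_b(C(4;1,2)) = β_b(C(5;1,2)) = 1. -/
/-!
In `C(n;1,2)` the graph distance is `⌈c/2⌉`, where `c` is the circular distance on `ℤ/n`, so
every eccentricity is `D = ⌊(n+2)/4⌋`. Two broadcasting vertices `u ≠ w` of an independent
broadcast `f` are at circular distance at least `2 max (f u) (f w) + 1`; hence the circular balls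
of radius `f u` are disjoint and `∑ (2 f u + 1) ≤ n`. One broadcasting vertex gives at most `D`,
two give at most `2(D-1)` (each value is below a distance `≤ D`), four or more give at most
`(n-4)/2`. For three, the pairwise circular distances sum to at most `n`, so `2 ∑ f + 3 ≤ n` with
equality only if all three values agree; then `n = 6r + 3`, and `3r` exceeds `2(D-1)` exactly
when `n ≡ 9 (mod 12)`. The extremal broadcasts use one vertex, two antipodal vertices, or three
vertices `n/3` apart.
-/

open Finset
open Fin.NatCast

section Broadcast

variable {V : Type*} [Fintype V] {G : SimpleGraph V}

lemma betaB_eq_of_le_of_exists {T : ℕ} (hle : ∀ f, IsIndepBroadcast G f → ∑ v, f v ≤ T)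
    (hT : ∃ f, IsIndepBroadcast G f ∧ ∑ v, f v = T) : betaB G = T :=
  IsGreatest.csSup_eq ⟨hT, by rintro _ ⟨f, hf, rfl⟩; exact hle f hf⟩

lemma exists_isIndepBroadcast_sum_eq_card_mul (S : Finset V) {r : ℕ}
    (hecc : ∀ v ∈ S, r ≤ eccent G v) (hsep : ∀ u ∈ S, ∀ v ∈ S, u ≠ v → r < G.dist u v) :
    ∃ f, IsIndepBroadcast G f ∧ ∑ v, f v = #S * r := by
  classical
  have hS : ∀ v, 0 < (if v ∈ S then r else 0) → v ∈ S := fun v h => by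
    by_contra hv
    simp [hv] at h
  refine ⟨fun v => if v ∈ S then r else 0, ⟨fun v => ?_, fun u v huv hu hv => ?_⟩, ?_⟩
  · dsimp only
    split_ifs with hv
    exacts [hecc v hv, Nat.zero_le _]
  · simp only [hS u hu, hS v hv, if_true, max_self]
    exact hsep u (hS u hu) v (hS v hv) huv
  · rw [sum_ite_mem, univ_inter, sum_const, smul_eq_mul]

end Broadcast

lemma exists_walk_length_le_of_descent {V : Type*} {G : SimpleGraph V} {v : V} (φ : V → ℕ)
    (hφ : ∀ u, u ≠ v → ∃ w, G.Adj u w ∧ φ w < φ u) (u : V) :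
    ∃ p : G.Walk u v, p.length ≤ φ u := by
  induction h : φ u using Nat.strong_induction_on generalizing u with
  | _ k ih =>
    by_cases huv : u = v
    · subst huv
      exact ⟨SimpleGraph.Walk.nil, by simp⟩
    obtain ⟨w, hadj, hw⟩ := hφ u huv
    obtain ⟨p, hp⟩ := ih (φ w) (h ▸ hw) w rfl
    exact ⟨SimpleGraph.Walk.cons hadj p, by rw [SimpleGraph.Walk.length_cons]; omega⟩

section CircDist

variable {n : ℕ}

def circDist (i j : Fin n) : ℕ := min (j - i).val (i - j).val

lemma circDist_comm (i j : Fin n) : circDist i j = circDist j i := min_comm _ _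

variable [NeZero n]

lemma val_sub_eq_ite (i j : Fin n) :
    (j - i).val = if i.val ≤ j.val then j.val - i.val else n + j.val - i.val := by
  have h := Fin.val_add_eq_ite i (j - i)
  rw [add_sub_cancel] at h
  have := (j - i).isLt
  split_ifs at h ⊢ <;> omega

lemma circDist_eq (i j : Fin n) :
    circDist i j = min (Nat.dist i j) (n - Nat.dist i j) := by
  unfold circDist Nat.dist
  rw [val_sub_eq_ite, val_sub_eq_ite]
  have := i.isLt
  have := j.isLt
  split_ifs <;> omega

lemma circDist_add_left (v i j : Fin n) : circDist (v + i) (v + j) = circDist i j := by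
  simp only [circDist, add_sub_add_left_eq_sub]

lemma circDist_eq_zero_iff {i j : Fin n} : circDist i j = 0 ↔ i = j := by
  rw [circDist_eq, Fin.ext_iff]; unfold Nat.dist; have := i.isLt; have := j.isLt; omega

lemma circDist_le_half (i j : Fin n) : circDist i j ≤ n / 2 := by
  rw [circDist_eq]; omega

lemma circDist_triangle (i j k : Fin n) : circDist i k ≤ circDist i j + circDist j k := by
  simp only [circDist_eq, Nat.dist]; have := i.isLt; have := j.isLt; have := k.isLt; omega

lemma circDist_add_circDist_add_circDist_le (i j k : Fin n) :
    circDist i j + circDist j k + circDist i k ≤ n := by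
  simp only [circDist_eq, Nat.dist]; have := i.isLt; have := j.isLt; have := k.isLt; omega

lemma circDist_natCast {a b : ℕ} (ha : a < n) (hb : b < n) :
    circDist (a : Fin n) (b : Fin n) = min (Nat.dist a b) (n - Nat.dist a b) := by
  rw [circDist_eq, Fin.val_cast_of_lt ha, Fin.val_cast_of_lt hb]

lemma exists_circDist_eq_and_circDist_eq_sub (u v : Fin n) {t : ℕ} (ht : t ≤ circDist u v) :
    ∃ w, circDist u w = t ∧ circDist w v = circDist u v - t := by
  wlog h : (v - u).val ≤ (u - v).val generalizing u v t
  · -- the shorter arc runs from `v` to `u`: take the point at distance `circDist u v - t` from `v`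
    obtain ⟨w, hvw, hwu⟩ := this v u (t := circDist u v - t) (by rw [circDist_comm]; omega)
      (by omega)
    have := circDist_comm u v
    exact ⟨w, by rw [circDist_comm]; omega, by rw [circDist_comm]; omega⟩
  have hd : circDist u v = (v - u).val := min_eq_left h
  have hx : circDist 0 (v - u) = circDist u v := by
    rw [← circDist_add_left u, add_zero, add_sub_cancel]
  have htn : t < n := by have := circDist_le_half u v; have := NeZero.pos n; omega
  refine ⟨u + (t : Fin n), ?_, ?_⟩
  · have h0 := circDist_add_left u 0 (t : Fin n)
    rw [add_zero] at h0
    rw [h0, circDist_eq, Fin.val_zero, Fin.val_cast_of_lt htn]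
    rw [circDist_eq, Fin.val_zero] at hx
    unfold Nat.dist at hx ⊢
    omega
  · conv_lhs => rw [← add_sub_cancel u v, circDist_add_left, circDist_eq, Fin.val_cast_of_lt htn]
    rw [circDist_eq, Fin.val_zero] at hx
    unfold Nat.dist at hx ⊢
    omega

end CircDist

section CircBall

variable {n : ℕ} [NeZero n]

def circBall (v : Fin n) (r : ℕ) : Finset (Fin n) := {x | circDist v x ≤ r}

lemma le_card_circBall (v : Fin n) {r : ℕ} (hr : 2 * r < n) : 2 * r + 1 ≤ #(circBall v r) := by
  set arc := (range (2 * r + 1)).image fun j : ℕ => v - (r : Fin n) + j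
  have hsub : arc ⊆ circBall v r := by
    intro x hx
    obtain ⟨j, hj, rfl⟩ := mem_image.mp hx
    rw [mem_range] at hj
    have h0 := circDist_add_left (v - (r : Fin n)) (r : Fin n) (j : Fin n)
    rw [sub_add_cancel] at h0
    simp only [circBall, mem_filter, mem_univ, true_and]
    rw [h0, circDist_natCast (by omega) (by omega)]
    unfold Nat.dist
    omega
  have hinj : Set.InjOn (fun j : ℕ => v - (r : Fin n) + (j : Fin n)) (range (2 * r + 1)) := by
    intro j hj j' hj' h
    simp only [coe_range, Set.mem_Iio] at hj hj'
    have := congrArg Fin.val (add_left_cancel h)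
    rwa [Fin.val_cast_of_lt (by omega), Fin.val_cast_of_lt (by omega)] at this
  calc 2 * r + 1 = #arc := by rw [card_image_of_injOn hinj, card_range]
    _ ≤ _ := card_le_card hsub

lemma sum_two_mul_add_one_le {S : Finset (Fin n)} {r : Fin n → ℕ} (hr : ∀ u ∈ S, 2 * r u < n)
    (hS : (S : Set (Fin n)).Pairwise fun u w => r u + r w < circDist u w) :
    ∑ u ∈ S, (2 * r u + 1) ≤ n := by
  have hdisj : (S : Set (Fin n)).PairwiseDisjoint fun u => circBall u (r u) := by
    intro u hu w hw huw
    refine disjoint_left.mpr fun x hxu hxw => ?_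
    simp only [circBall, mem_filter, mem_univ, true_and] at hxu hxw
    have := circDist_triangle u x w
    have := circDist_comm x w
    have := hS hu hw huw
    omega
  calc ∑ u ∈ S, (2 * r u + 1) ≤ ∑ u ∈ S, #(circBall u (r u)) :=
        sum_le_sum fun u _ => le_card_circBall u (hr u ‹_›)
    _ = #(S.biUnion fun u => circBall u (r u)) := (card_biUnion hdisj).symm
    _ ≤ #(univ : Finset (Fin n)) := card_le_univ _
    _ = n := card_fin n

end CircBall

section CirculantGraph

variable {n : ℕ} [NeZero n]

lemma circulantGraph_adj_iff {a : ℕ} (ha : 0 < a) (han : a < n) (u v : Fin n) :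
    (circulantGraph n a).Adj u v ↔ circDist u v = 1 ∨ circDist u v = min a (n - a) := by
  have := u.isLt
  have := v.isLt
  simp only [circulantGraph, SimpleGraph.fromRel_adj, ne_eq, Fin.ext_iff, circDist_eq, Nat.dist,
    Nat.add_mod_eq_ite, Nat.mod_eq_of_lt u.isLt, Nat.mod_eq_of_lt v.isLt, Nat.mod_eq_of_lt han,
    Nat.mod_eq_of_lt (show 1 < n by omega)]
  split_ifs <;> omega

lemma circDist_le_two_mul_length (hn : 4 ≤ n) {u v : Fin n}
    (p : (circulantGraph n 2).Walk u v) : circDist u v ≤ 2 * p.length := by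
  induction p with
  | nil => simp [circDist_eq_zero_iff]
  | @cons u w v h p ih =>
    have := (circulantGraph_adj_iff two_pos (by omega) u w).mp h
    have := circDist_triangle u w v
    rw [SimpleGraph.Walk.length_cons]
    omega

lemma dist_circulantGraph_two (hn : 4 ≤ n) (u v : Fin n) :
    (circulantGraph n 2).dist u v = (circDist u v + 1) / 2 := by
  have hwalk : ∀ u, ∃ p : (circulantGraph n 2).Walk u v, p.length ≤ (circDist u v + 1) / 2 := by
    refine exists_walk_length_le_of_descent _ fun u huv => ?_
    have hpos : circDist u v ≠ 0 := circDist_eq_zero_iff.not.mpr huv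
    obtain ⟨w, huw, hwv⟩ :=
      exists_circDist_eq_and_circDist_eq_sub u v (min_le_right 2 (circDist u v))
    refine ⟨w, (circulantGraph_adj_iff two_pos (by omega) u w).mpr ?_, ?_⟩ <;> omega
  obtain ⟨p, hp⟩ := hwalk u
  obtain ⟨q, hq⟩ := p.reachable.exists_walk_length_eq_dist
  have := circDist_le_two_mul_length hn q
  have := SimpleGraph.dist_le p
  omega

lemma eccent_circulantGraph_two (hn : 4 ≤ n) (v : Fin n) :
    eccent (circulantGraph n 2) v = (n + 2) / 4 := by
  apply le_antisymm
  · refine Finset.sup_le fun u _ => ?_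
    rw [dist_circulantGraph_two hn]
    have := circDist_le_half v u
    omega
  · have h0 := circDist_add_left v 0 ((n / 2 : ℕ) : Fin n)
    rw [add_zero] at h0
    have h1 : circDist 0 ((n / 2 : ℕ) : Fin n) = n / 2 := by
      rw [circDist_eq, Fin.val_zero, Fin.val_cast_of_lt (by omega)]
      unfold Nat.dist
      omega
    calc (n + 2) / 4 = (circulantGraph n 2).dist v (v + ((n / 2 : ℕ) : Fin n)) := by
          rw [dist_circulantGraph_two hn, h0, h1]
          omega
      _ ≤ _ := Finset.le_sup (f := fun u => (circulantGraph n 2).dist v u) (mem_univ _)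

end CirculantGraph

def betaBCirculantTwo (n : ℕ) : ℕ :=
  if n % 12 = 9 then (n - 3) / 2 else max ((n + 2) / 4) (2 * ((n + 2) / 4 - 1))

section CirculantBroadcast

variable {n : ℕ} [NeZero n]

lemma sum_le_betaBCirculantTwo (hn : 4 ≤ n) {f : Fin n → ℕ}
    (hf : IsIndepBroadcast (circulantGraph n 2) f) : ∑ v, f v ≤ betaBCirculantTwo n := by
  classical
  set D := (n + 2) / 4 with hD
  set S : Finset (Fin n) := {v | f v ≠ 0}
  have hle : ∀ v, f v ≤ D := fun v => (hf.1 v).trans (eccent_circulantGraph_two hn v).le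
  have hsep : ∀ u ∈ S, ∀ w ∈ S, u ≠ w → 2 * max (f u) (f w) + 1 ≤ circDist u w := by
    intro u hu w hw huw
    simp only [S, mem_filter, mem_univ, true_and] at hu hw
    have := hf.2 u w huw (Nat.pos_of_ne_zero hu) (Nat.pos_of_ne_zero hw)
    rw [dist_circulantGraph_two hn] at this
    omega
  have hpack : 2 * ∑ v ∈ S, f v + #S ≤ n := by
    have := sum_two_mul_add_one_le (S := S) (r := f) (fun u _ => by have := hle u; omega)
      fun u hu w hw huw => by have := hsep u hu w hw huw; omega
    rwa [sum_add_distrib, ← mul_sum, sum_const, smul_eq_mul, mul_one] at this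
  rw [← sum_filter_ne_zero, betaBCirculantTwo]
  change ∑ v ∈ S, f v ≤ _
  obtain hS | hS | hS | hS : #S ≤ 1 ∨ #S = 2 ∨ #S = 3 ∨ 4 ≤ #S := by omega
  · have hsum : ∑ v ∈ S, f v ≤ #S * D := by
      rw [← smul_eq_mul]
      exact sum_le_card_nsmul _ _ _ fun u _ => hle u
    have := hsum.trans (Nat.mul_le_mul_right D hS)
    split_ifs <;> omega
  · obtain ⟨a, b, hab, hS⟩ := card_eq_two.mp hS
    have := hsep a (by simp [hS]) b (by simp [hS]) hab
    have := circDist_le_half a b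
    rw [hS, sum_pair hab]
    split_ifs <;> omega
  · obtain ⟨a, b, c, hab, hac, hbc, hS⟩ := card_eq_three.mp hS
    have := hsep a (by simp [hS]) b (by simp [hS]) hab
    have := hsep b (by simp [hS]) c (by simp [hS]) hbc
    have := hsep a (by simp [hS]) c (by simp [hS]) hac
    have := circDist_add_circDist_add_circDist_le a b c
    rw [hS, sum_insert (by simp [hab, hac]), sum_pair hbc]
    split_ifs <;> omega
  · split_ifs <;> omega

lemma exists_isIndepBroadcast_circulantGraph_two (hn : 4 ≤ n) (S : Finset (Fin n)) {r : ℕ}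
    (hr : r ≤ (n + 2) / 4) (hS : ∀ u ∈ S, ∀ v ∈ S, u ≠ v → 2 * r < circDist u v) :
    ∃ f, IsIndepBroadcast (circulantGraph n 2) f ∧ ∑ v, f v = #S * r := by
  refine exists_isIndepBroadcast_sum_eq_card_mul S
    (fun v _ => hr.trans (eccent_circulantGraph_two hn v).ge) fun u hu v hv huv => ?_
  rw [dist_circulantGraph_two hn]
  have := hS u hu v hv huv
  omega

lemma exists_isIndepBroadcast_sum_eq_of_mod_twelve_eq_nine (h9 : n % 12 = 9) :
    ∃ f, IsIndepBroadcast (circulantGraph n 2) f ∧ ∑ v, f v = (n - 3) / 2 := by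
  set g := n / 3
  have hg : g < n := by omega
  have h2g : 2 * g < n := by omega
  set S : Finset (Fin n) := {0, (g : Fin n), ((2 * g : ℕ) : Fin n)}
  have hcard : #S = 3 := by
    rw [card_eq_three]
    refine ⟨_, _, _, ?_, ?_, ?_, rfl⟩ <;>
      simp only [ne_eq, Fin.ext_iff, Fin.val_zero, Fin.val_cast_of_lt hg,
        Fin.val_cast_of_lt h2g] <;> omega
  obtain ⟨f, hf, hsum⟩ := exists_isIndepBroadcast_circulantGraph_two (by omega) S
    (r := (n - 3) / 6) (by omega) (by
      simp only [S, mem_insert, mem_singleton]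
      rintro u (rfl | rfl | rfl) v (rfl | rfl | rfl) huv <;>
        first
        | exact absurd rfl huv
        | (simp only [circDist_eq, Fin.val_zero, Fin.val_cast_of_lt hg, Fin.val_cast_of_lt h2g,
            Nat.dist]; omega))
  exact ⟨f, hf, by rw [hsum, hcard]; omega⟩

lemma exists_isIndepBroadcast_sum_eq_two_mul (hn : 4 ≤ n) :
    ∃ f, IsIndepBroadcast (circulantGraph n 2) f ∧ ∑ v, f v = 2 * ((n + 2) / 4 - 1) := by
  have hm : n / 2 < n := by omega
  have hcard : #({0, ((n / 2 : ℕ) : Fin n)} : Finset (Fin n)) = 2 := by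
    rw [card_pair]
    simp only [ne_eq, Fin.ext_iff, Fin.val_zero, Fin.val_cast_of_lt hm]
    omega
  obtain ⟨f, hf, hsum⟩ := exists_isIndepBroadcast_circulantGraph_two hn
    {0, ((n / 2 : ℕ) : Fin n)} (r := (n + 2) / 4 - 1) (by omega) (by
      simp only [mem_insert, mem_singleton]
      rintro u (rfl | rfl) v (rfl | rfl) huv <;>
        first
        | exact absurd rfl huv
        | (simp only [circDist_eq, Fin.val_zero, Fin.val_cast_of_lt hm, Nat.dist]; omega))
  exact ⟨f, hf, by rw [hsum, hcard]⟩

lemma exists_isIndepBroadcast_sum_eq_betaBCirculantTwo (hn : 4 ≤ n) :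
    ∃ f, IsIndepBroadcast (circulantGraph n 2) f ∧ ∑ v, f v = betaBCirculantTwo n := by
  unfold betaBCirculantTwo
  split_ifs with h9
  · exact exists_isIndepBroadcast_sum_eq_of_mod_twelve_eq_nine h9
  rcases le_total ((n + 2) / 4) (2 * ((n + 2) / 4 - 1)) with hD | hD
  · rw [max_eq_right hD]
    exact exists_isIndepBroadcast_sum_eq_two_mul hn
  · rw [max_eq_left hD, ← one_mul ((n + 2) / 4), ← card_singleton (0 : Fin n)]
    exact exists_isIndepBroadcast_circulantGraph_two hn _ le_rfl (by simp)

theorem betaB_circulantGraph_two (hn : 4 ≤ n) :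
    betaB (circulantGraph n 2) = betaBCirculantTwo n :=
  betaB_eq_of_le_of_exists (fun _ hf => sum_le_betaBCirculantTwo hn hf)
    (exists_isIndepBroadcast_sum_eq_betaBCirculantTwo hn)

end CirculantBroadcast

theorem stmt14 (n : ℕ) (hn : 6 ≤ n) :
    (n % 12 = 9 → betaB (circulantGraph n 2) = (n - 3) / 2) ∧
    (n % 12 ≠ 9 → betaB (circulantGraph n 2) = 2 * ((n - 1 + 3) / 4 - 1)) ∧
    betaB (circulantGraph 4 2) = 1 ∧ betaB (circulantGraph 5 2) = 1 := by
  have : NeZero n := ⟨by omega⟩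
  refine ⟨fun h9 => ?_, fun h9 => ?_, ?_, ?_⟩
  · rw [betaB_circulantGraph_two (by omega), betaBCirculantTwo, if_pos h9]
  · rw [betaB_circulantGraph_two (by omega), betaBCirculantTwo, if_neg h9]
    omega
  · rw [betaB_circulantGraph_two le_rfl]
    rfl
  · rw [betaB_circulantGraph_two (by norm_num)]
    rfl
end
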